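/- Let g = g_{5,3,7}. For every F ∈ g*, the skew-symmetric bilinear form B_F has rank either 0 or 2; equivalently, the subspace {X ∈ g : F([X, Y]) = 0 for all Y ∈ g} has dimension 5 or 3. (This is the infinitesimal MD-condition: every coadjoint orbit of the corresponding connected simply connected Lie group G_{5,3,7} has dimension 0 or 2, so it is an MD5-group.) -/

import Mathlib

open scoped Matrix

/-- The Lie bracket of g_{5,3,7}: [X1,X2] = X3, [X2,X3] = X3, [X2,X4] = X3 + X4, [X2,X5] = X4 + X5,
written in coordinates with respect to the basis (X₁, X₂, X₃, X₄, X₅) (all other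
brackets of basis vectors vanish); it is the bilinear extension of the structure
constants above. -/
def bracketg537 (U V : Fin 5 → ℝ) : Fin 5 → ℝ :=
  ![0, 0,
    (U 0 * V 1 - U 1 * V 0) + (U 1 * V 2 - U 2 * V 1) + (U 1 * V 3 - U 3 * V 1),
    (U 1 * V 3 - U 3 * V 1) + (U 1 * V 4 - U 4 * V 1),
    U 1 * V 4 - U 4 * V 1]

/-- The matrix (in the basis (X₁, ..., X₅)) of the skew-symmetric bilinear form
B_F(X, Y) = F([X, Y]); the functional F is identified with its coordinate vector with
respect to the dual basis, acting by the dot product. -/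
def BFg537 (F : Fin 5 → ℝ) : Matrix (Fin 5) (Fin 5) ℝ :=
  Matrix.of fun i j => F ⬝ᵥ bracketg537 (Pi.single i 1) (Pi.single j 1)

/-- The radical {X ∈ g | F([X, Y]) = 0 for all Y ∈ g} of the form B_F, as a subspace. -/
def radg537 (F : Fin 5 → ℝ) : Submodule ℝ (Fin 5 → ℝ) where
  carrier := {X | ∀ Y : Fin 5 → ℝ, F ⬝ᵥ bracketg537 X Y = 0}
  zero_mem' := by
    intro Y
    simp [bracketg537, dotProduct, Fin.sum_univ_five]
  add_mem' := by
    intro a b ha hb Y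
    have h1 := ha Y
    have h2 := hb Y
    simp only [bracketg537, dotProduct, Fin.sum_univ_five, Matrix.cons_val_zero,
      Matrix.cons_val_one, Matrix.head_cons, Matrix.cons_val_two, Matrix.tail_cons,
      Matrix.cons_val_three, Matrix.cons_val_four, Pi.add_apply] at h1 h2 ⊢
    linear_combination h1 + h2
  smul_mem' := by
    intro c a ha Y
    have h1 := ha Y
    simp only [bracketg537, dotProduct, Fin.sum_univ_five, Matrix.cons_val_zero,
      Matrix.cons_val_one, Matrix.head_cons, Matrix.cons_val_two, Matrix.tail_cons,
      Matrix.cons_val_three, Matrix.cons_val_four, Pi.smul_apply, smul_eq_mul] at h1 ⊢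
    linear_combination c * h1

/-!
Every nonzero bracket of basis vectors of `g_{5,3,7}` involves `X₂`, so
`[X, Y] = x₂ [X₂, Y] - y₂ [X₂, X]`, where `x₂, y₂` are the `X₂`-coordinates (index `1` in
`Fin 5`). Hence `B_F = X₂* ∧ (F ∘ ad X₂)`, a wedge of two functionals: its rank is `0`
if `F ∘ ad X₂ = 0` and `2` otherwise, since `F ∘ ad X₂` kills `X₂` and so is independent of `X₂*`.
The radical of `B_F` is the kernel of its matrix, so its dimension is `5 - rank B_F`.
-/

open Matrix

section Wedge

variable {K : Type*} [Field K] {n : Type*}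

def wedgeMatrix (a b : n → K) : Matrix n n K :=
  vecMulVec a b - vecMulVec b a

theorem wedgeMatrix_apply (a b : n → K) (i j : n) :
    wedgeMatrix a b i j = a i * b j - b i * a j :=
  rfl

@[simp]
theorem wedgeMatrix_zero_right (a : n → K) : wedgeMatrix a 0 = 0 := by
  ext i j
  simp [wedgeMatrix_apply]

theorem linearIndependent_single_one_pair [DecidableEq n] {b : n → K} {i : n} (hb : b ≠ 0)
    (hbi : b i = 0) : LinearIndependent K ![Pi.single i 1, b] := by
  rw [LinearIndependent.pair_iff]
  intro s t hst
  have hs : s = 0 := by simpa [hbi] using congrFun hst i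
  subst hs
  simpa [hb] using hst

variable [Fintype n]

theorem rank_add_finrank_ker_mulVecLin (A : Matrix n n K) :
    A.rank + Module.finrank K (LinearMap.ker A.mulVecLin) = Fintype.card n := by
  rw [rank, LinearMap.finrank_range_add_finrank_ker, Module.finrank_fintype_fun_eq_card]

theorem rank_eq_of_ker_mulVecLin_eq {m m' : Type*} [Fintype m] [Fintype m'] {A : Matrix m n K}
    {B : Matrix m' n K} (h : LinearMap.ker A.mulVecLin = LinearMap.ker B.mulVecLin) :
    A.rank = B.rank := by
  have hA := LinearMap.finrank_range_add_finrank_ker A.mulVecLin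
  have hB := LinearMap.finrank_range_add_finrank_ker B.mulVecLin
  rw [h] at hA
  exact Nat.add_right_cancel (hA.trans hB.symm)

theorem of_pair_mulVec_eq_zero_iff (a b x : n → K) :
    of ![a, b] *ᵥ x = 0 ↔ a ⬝ᵥ x = 0 ∧ b ⬝ᵥ x = 0 := by
  simp [funext_iff, Fin.forall_fin_two]

variable (a b : n → K)

theorem wedgeMatrix_mulVec (x : n → K) :
    wedgeMatrix a b *ᵥ x = (b ⬝ᵥ x) • a - (a ⬝ᵥ x) • b := by
  simp [wedgeMatrix, sub_mulVec, vecMulVec_mulVec]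

theorem dotProduct_wedgeMatrix_mulVec (x y : n → K) :
    x ⬝ᵥ wedgeMatrix a b *ᵥ y = (a ⬝ᵥ x) * (b ⬝ᵥ y) - (b ⬝ᵥ x) * (a ⬝ᵥ y) := by
  rw [wedgeMatrix_mulVec, dotProduct_sub, dotProduct_smul, dotProduct_smul, smul_eq_mul,
    smul_eq_mul, dotProduct_comm x a, dotProduct_comm x b]
  ring

theorem dotProduct_wedgeMatrix_mulVec_swap (x y : n → K) :
    x ⬝ᵥ wedgeMatrix a b *ᵥ y = -(y ⬝ᵥ wedgeMatrix a b *ᵥ x) := by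
  rw [dotProduct_wedgeMatrix_mulVec, dotProduct_wedgeMatrix_mulVec]
  ring

theorem forall_dotProduct_wedgeMatrix_mulVec_eq_zero_iff (x : n → K) :
    (∀ y, x ⬝ᵥ wedgeMatrix a b *ᵥ y = 0) ↔ wedgeMatrix a b *ᵥ x = 0 := by
  simp_rw [dotProduct_wedgeMatrix_mulVec_swap a b x, neg_eq_zero,
    dotProduct_comm _ (wedgeMatrix a b *ᵥ x)]
  exact dotProduct_eq_zero_iff

variable {a b}

theorem ker_wedgeMatrix_mulVecLin (hab : LinearIndependent K ![a, b]) :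
    LinearMap.ker (wedgeMatrix a b).mulVecLin = LinearMap.ker (of ![a, b]).mulVecLin := by
  ext x
  rw [LinearMap.mem_ker, LinearMap.mem_ker, mulVecLin_apply, mulVecLin_apply,
    of_pair_mulVec_eq_zero_iff, wedgeMatrix_mulVec]
  constructor
  · intro h
    obtain ⟨hb, ha⟩ := LinearIndependent.pair_iff.mp hab (b ⬝ᵥ x) (-(a ⬝ᵥ x))
      (by rw [neg_smul, ← sub_eq_add_neg, h])
    exact ⟨neg_eq_zero.mp ha, hb⟩
  · rintro ⟨ha, hb⟩
    simp [ha, hb]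

theorem rank_wedgeMatrix (hab : LinearIndependent K ![a, b]) : (wedgeMatrix a b).rank = 2 := by
  rw [rank_eq_of_ker_mulVecLin_eq (ker_wedgeMatrix_mulVecLin hab)]
  exact LinearIndependent.rank_matrix (M := of ![a, b]) hab

end Wedge

/-- The coordinates of the functional `Y ↦ F([X₂, Y])`. -/
def compAdX2g537 (F : Fin 5 → ℝ) : Fin 5 → ℝ :=
  ![-F 2, 0, F 2, F 2 + F 3, F 3 + F 4]

theorem dotProduct_bracketg537 (F X Y : Fin 5 → ℝ) :
    F ⬝ᵥ bracketg537 X Y = X ⬝ᵥ wedgeMatrix (Pi.single 1 1) (compAdX2g537 F) *ᵥ Y := by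
  rw [dotProduct_wedgeMatrix_mulVec, single_one_dotProduct, single_one_dotProduct]
  simp only [dotProduct, bracketg537, compAdX2g537, Fin.sum_univ_five, Fin.isValue, cons_val_zero,
    cons_val_one, cons_val, mul_zero, zero_mul, add_zero, zero_add, neg_mul]
  ring

theorem BFg537_eq_wedgeMatrix (F : Fin 5 → ℝ) :
    BFg537 F = wedgeMatrix (Pi.single 1 1) (compAdX2g537 F) := by
  ext i j
  rw [BFg537, of_apply, dotProduct_bracketg537, mulVec_single_one, single_one_dotProduct]
  rfl

theorem radg537_eq_ker (F : Fin 5 → ℝ) : radg537 F = LinearMap.ker (BFg537 F).mulVecLin := by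
  ext X
  rw [LinearMap.mem_ker, mulVecLin_apply, BFg537_eq_wedgeMatrix,
    ← forall_dotProduct_wedgeMatrix_mulVec_eq_zero_iff]
  simp_rw [← dotProduct_bracketg537]
  rfl

theorem rank_BFg537 (F : Fin 5 → ℝ) : (BFg537 F).rank = 0 ∨ (BFg537 F).rank = 2 := by
  rw [BFg537_eq_wedgeMatrix]
  by_cases hF : compAdX2g537 F = 0
  · left
    rw [hF, wedgeMatrix_zero_right, rank_zero]
  · exact Or.inr (rank_wedgeMatrix (linearIndependent_single_one_pair hF rfl))

/-- For every functional F, the skew-symmetric form B_F has rank 0 or 2; equivalently,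
its radical {X | F([X, Y]) = 0 for all Y} has dimension 5 or 3 (the infinitesimal
MD-condition: every coadjoint orbit has dimension 0 or 2). -/
theorem md_condition_g537 (F : Fin 5 → ℝ) :
    ((BFg537 F).rank = 0 ∨ (BFg537 F).rank = 2) ∧
    (Module.finrank ℝ (radg537 F) = 5 ∨ Module.finrank ℝ (radg537 F) = 3) := by
  have hrank := rank_BFg537 F
  have hsum := rank_add_finrank_ker_mulVecLin (BFg537 F)
  rw [← radg537_eq_ker, Fintype.card_fin] at hsum
  exact ⟨hrank, by omega⟩
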